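/- arXiv:2007.14512 — 2 statements merged into one kernel-verified Lean document; each statement's English description precedes it below -/
import Mathlib

section
/- Let J_1, …, J_m be subintervals of [n] and write C̃_{s_{J_1}}(q) ⋯ C̃_{s_{J_m}}(q) = Σ_{w∈S_n} a_w T_w in the natural basis of H_n(q). Then for every w ∈ S_n, a_w = Σ_π q^{dfct(π)}, where the sum is over all path families π of type w which cover the star network G_{J_1} ∘ ⋯ ∘ G_{J_m}. -/
/- Common combinatorial setup: star networks, covering path families,
   crossing/noncrossing statistics, and the base ring ℤ[q^{1/2},q^{-1/2}]. -/

open Equiv Finset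
open scoped Classical

noncomputable section

/-- The ring `ℤ[q^{1/2}, q^{-1/2}]`, realized as Laurent polynomials in the
variable `q^{1/2}` (so the exponent-`k` monomial is `q^{k/2}`). -/
abbrev R2 : Type := LaurentPolynomial ℤ

/-- `q^{k/2}`. -/
def Qp (k : ℤ) : R2 := LaurentPolynomial.T k

/-- `q`. -/
def qq : R2 := LaurentPolynomial.T 2

/-- Coxeter length of a permutation, i.e. its inversion number. -/
def len {n : ℕ} (w : Perm (Fin n)) : ℕ :=
  ((univ : Finset (Fin n × Fin n)).filter fun p => p.1 < p.2 ∧ w p.2 < w p.1).card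

/-- Membership in the interval `J = [a,b] ⊆ [n]`. -/
def memJ {n : ℕ} (J : Fin n × Fin n) (i : Fin n) : Prop := J.1 ≤ i ∧ i ≤ J.2

/-- Membership in the subgroup `S_J ≤ S_n` generated by the adjacent
transpositions `s_a, …, s_{b-1}` of the interval `J = [a,b]`; equivalently,
the permutations supported on `[a,b]`. -/
def inSJ {n : ℕ} (J : Fin n × Fin n) (w : Perm (Fin n)) : Prop :=
  ∀ i, w i ≠ i → memJ J i

/-- A path family covering the star network `G_{J_1} ∘ ⋯ ∘ G_{J_m}` is
faithfully encoded by the permutation of the wire positions realized at each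
simple-star factor: at factor `p` the paths whose current positions lie in
`J_p` pass through the central vertex and are permuted arbitrarily within
`J_p` (every entering and leaving edge being used exactly once), while all
other paths use their unique horizontal edge.  Thus a covering family is a
sequence `vs` of permutations with `vs p` supported on `J_p`. -/
def IsPathFamily {n m : ℕ} (Js : Fin m → Fin n × Fin n)
    (vs : Fin m → Perm (Fin n)) : Prop :=
  ∀ p, inSJ (Js p) (vs p)

/-- The position of the path starting at source `i` just before factor `k`
(as a permutation of sources). -/
def posAt {n m : ℕ} (vs : Fin m → Perm (Fin n)) (k : ℕ) : Perm (Fin n) :=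
  (((List.ofFn vs).take k).reverse).prod

/-- The type of a covering path family: the path starting at source `i`
terminates at sink `typeOf vs i`. -/
def typeOf {n m : ℕ} (vs : Fin m → Perm (Fin n)) : Perm (Fin n) := posAt vs m

/-- The path from source `i` passes through the central vertex of the factor
`G_{J_p}`. -/
def centeredAt {n m : ℕ} (Js : Fin m → Fin n × Fin n) (vs : Fin m → Perm (Fin n))
    (p : Fin m) (i : Fin n) : Prop :=
  (Js p).1 < (Js p).2 ∧ memJ (Js p) (posAt vs p i)

/-- The paths from sources `i` and `j` both pass through the central vertex of
the factor `G_{J_p}`. -/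
def meetAt {n m : ℕ} (Js : Fin m → Fin n × Fin n) (vs : Fin m → Perm (Fin n))
    (p : Fin m) (i j : Fin n) : Prop :=
  centeredAt Js vs p i ∧ centeredAt Js vs p j

/-- The triple `(π_i, π_j, p)` is a crossing: the two paths intersect at the
central vertex of `G_{J_p}` and cross there. -/
def crossingAt {n m : ℕ} (Js : Fin m → Fin n × Fin n) (vs : Fin m → Perm (Fin n))
    (p : Fin m) (i j : Fin n) : Prop :=
  meetAt Js vs p i j ∧
    ¬ ((posAt vs p i < posAt vs p j) ↔ (posAt vs (p.1 + 1) i < posAt vs (p.1 + 1) j))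

/-- `cross(π)`: the number of crossings of the path family. -/
def crossNum {n m : ℕ} (Js : Fin m → Fin n × Fin n)
    (vs : Fin m → Perm (Fin n)) : ℕ :=
  ((univ : Finset ((Fin n × Fin n) × Fin m)).filter fun x =>
    x.1.1 < x.1.2 ∧ crossingAt Js vs x.2 x.1.1 x.1.2).card

/-- The triple `(π_i, π_j, p)` is a noncrossing with `π_i` entering and
leaving the central vertex of `G_{J_p}` below `π_j`. -/
def noncrossBelow {n m : ℕ} (Js : Fin m → Fin n × Fin n) (vs : Fin m → Perm (Fin n))
    (p : Fin m) (i j : Fin n) : Prop :=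
  meetAt Js vs p i j ∧
    posAt vs p i < posAt vs p j ∧ posAt vs (p.1 + 1) i < posAt vs (p.1 + 1) j

/-- `incross(U)` for a tableau `U` containing the paths of `π`, recorded via
the function `col` assigning to each path (index) the index of the column of
`U` containing it: the number of inverted noncrossings, i.e. noncrossings
`(π_i, π_j, p)` (with `π_i` below `π_j`) such that `π_j` lies in an earlier
column of `U` than `π_i`. -/
def incrossNum {n m : ℕ} (Js : Fin m → Fin n × Fin n) (vs : Fin m → Perm (Fin n))
    (col : Fin n → ℕ) : ℕ :=
  ((univ : Finset ((Fin n × Fin n) × Fin m)).filter fun x =>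
    noncrossBelow Js vs x.2 x.1.1 x.1.2 ∧ col x.1.2 < col x.1.1).card

/-- The number of crossings of the two paths `π_i, π_j` strictly before the
factor `G_{J_p}`. -/
def crossBefore {n m : ℕ} (Js : Fin m → Fin n × Fin n) (vs : Fin m → Perm (Fin n))
    (p : Fin m) (i j : Fin n) : ℕ :=
  ((univ : Finset (Fin m)).filter fun k => k < p ∧ crossingAt Js vs k i j).card

/-- The triple `(π_i, π_j, p)` is defective: the paths meet at the central
vertex of `G_{J_p}` having previously crossed an odd number of times. -/
def defectiveAt {n m : ℕ} (Js : Fin m → Fin n × Fin n) (vs : Fin m → Perm (Fin n))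
    (p : Fin m) (i j : Fin n) : Prop :=
  meetAt Js vs p i j ∧ Odd (crossBefore Js vs p i j)

/-- `dfct(π)`: the number of defective triples of the path family. -/
def dfctNum {n m : ℕ} (Js : Fin m → Fin n × Fin n)
    (vs : Fin m → Perm (Fin n)) : ℕ :=
  ((univ : Finset ((Fin n × Fin n) × Fin m)).filter fun x =>
    x.1.1 < x.1.2 ∧ defectiveAt Js vs x.2 x.1.1 x.1.2).card

/-- `cdncross(W)`: the number of defective noncrossings between pairs of
paths appearing in the same column of the tableau recorded by `col`. -/
def cdncrossNum {n m : ℕ} (Js : Fin m → Fin n × Fin n) (vs : Fin m → Perm (Fin n))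
    (col : Fin n → ℕ) : ℕ :=
  ((univ : Finset ((Fin n × Fin n) × Fin m)).filter fun x =>
    x.1.1 < x.1.2 ∧ defectiveAt Js vs x.2 x.1.1 x.1.2 ∧
      ¬ crossingAt Js vs x.2 x.1.1 x.1.2 ∧ col x.1.1 = col x.1.2).card

/-- The adjacent transposition `s_{i+1}` (0-indexed: swaps positions `i` and
`i+1`). -/
def swp {n : ℕ} (i : ℕ) (h : i + 1 < n) : Perm (Fin n) :=
  Equiv.swap ⟨i, by omega⟩ ⟨i + 1, h⟩

end
/- The Hecke algebra `H_n(q)`, presented abstractly: a ring `H` which is an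
algebra over `R2 = ℤ[q^{1/2},q^{-1/2}]` together with a family
`T : S_n → H` (the natural basis) satisfying `T_e = 1` and the defining
right-multiplication rule by the generators `T_{s_i}`.  Group products of
permutations are written so that the product `v w` of the paper corresponds
to the composition `w * v` of `Equiv.Perm`. -/

noncomputable section
open Equiv Finset
open scoped Classical

/-- The defining relations of the Hecke algebra in terms of the natural
basis: `T_e = 1` and
`T_w T_{s_i} = T_{w s_i}` if `ℓ(w s_i) > ℓ(w)`, and
`T_w T_{s_i} = q T_{w s_i} + (q-1) T_w` otherwise. -/
def HeckeOK {n : ℕ} {H : Type*} [Ring H] [Algebra R2 H]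
    (T : Perm (Fin n) → H) : Prop :=
  T 1 = 1 ∧
    ∀ (w : Perm (Fin n)) (i : ℕ) (h : i + 1 < n),
      T w * T (swp i h) =
        if len w < len (swp i h * w) then T (swp i h * w)
        else qq • T (swp i h * w) + (qq - 1) • T w

/-- The (modified) Kazhdan–Lusztig basis element
`C̃_{s_J}(q) = Σ_{v ∈ S_J} T_v`. -/
def CJ {n : ℕ} {H : Type*} [Ring H] [Algebra R2 H]
    (T : Perm (Fin n) → H) (J : Fin n × Fin n) : H :=
  ∑ v ∈ (univ : Finset (Perm (Fin n))).filter (fun v => inSJ J v), T v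

/-- The product `C̃_{s_{J_1}}(q) ⋯ C̃_{s_{J_m}}(q)`. -/
def Cprod {n m : ℕ} {H : Type*} [Ring H] [Algebra R2 H]
    (T : Perm (Fin n) → H) (Js : Fin m → Fin n × Fin n) : H :=
  (List.ofFn (fun p => CJ T (Js p))).prod

end

/-! Multiplying the product out factor by factor uses
`T_u C̃_{s_J} = q^{inv_J(u)} ∑_{v ∈ S_J} T_{uv}`, where `inv_J(u)` counts the inversions of `u`
whose values both lie in `J`: descents of `u` inside `J` are absorbed one at a time by
`T_s C̃_{s_J} = q C̃_{s_J}`. Choosing `v_p ∈ S_{J_p}` at every factor is choosing a covering path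
family, and the exponent collected at factor `p` counts the pairs of paths that meet at its
central vertex in the reverse of their initial order. Each crossing swaps the order of a pair and
nothing else does, so these are exactly the pairs that have crossed an odd number of times
before: the defective triples at `p`. -/

noncomputable section
open Equiv Finset
open scoped Classical

variable {n : ℕ}

def lo {j : ℕ} (h : j + 1 < n) : Fin n := ⟨j, by omega⟩

def hi {j : ℕ} (h : j + 1 < n) : Fin n := ⟨j + 1, h⟩

section Swp

variable {j : ℕ} (h : j + 1 < n)

lemma lo_lt_hi : lo h < hi h := Fin.lt_def.2 j.lt_succ_self

lemma swp_apply_lo : swp j h (lo h) = hi h := swap_apply_left _ _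

lemma swp_apply_hi : swp j h (hi h) = lo h := swap_apply_right _ _

lemma swp_mul_swp : swp j h * swp j h = 1 := swap_mul_self _ _

lemma swp_inv : (swp j h)⁻¹ = swp j h := swap_inv _ _

lemma val_swp_apply (x : Fin n) :
    (swp j h x : ℕ) = if (x : ℕ) = j then j + 1 else if (x : ℕ) = j + 1 then j else x := by
  rw [swp, swap_apply_def]
  split_ifs <;> simp_all [Fin.ext_iff]

end Swp

def inversions (w : Perm (Fin n)) : Finset (Fin n × Fin n) :=
  univ.filter fun p => p.1 < p.2 ∧ w p.2 < w p.1

lemma len_eq_card_inversions (w : Perm (Fin n)) : len w = #(inversions w) := rfl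

lemma mem_inversions {w : Perm (Fin n)} {p : Fin n × Fin n} :
    p ∈ inversions w ↔ p.1 < p.2 ∧ w p.2 < w p.1 := by
  simp [inversions]

lemma len_one : len (1 : Perm (Fin n)) = 0 := by
  rw [len_eq_card_inversions, card_eq_zero, eq_empty_iff_forall_notMem]
  exact fun _ hp => (lt_asymm (mem_inversions.1 hp).1 (mem_inversions.1 hp).2)

lemma inversions_swp_mul {j : ℕ} (h : j + 1 < n) {w : Perm (Fin n)}
    (hw : w⁻¹ (lo h) < w⁻¹ (hi h)) :
    inversions (swp j h * w) = insert (w⁻¹ (lo h), w⁻¹ (hi h)) (inversions w) := by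
  ext ⟨x, y⟩
  have hlo : w x = lo h → w y = hi h → x < y := by
    rintro hx hy; simpa [← hx, ← hy] using hw
  have hhi : w x = hi h → w y = lo h → y < x := by
    rintro hx hy; simpa [← hx, ← hy] using hw
  simp only [mem_insert, mem_inversions, Prod.mk.injEq, Perm.mul_apply, Perm.eq_inv_iff_eq]
  have hx := val_swp_apply h (w x)
  have hy := val_swp_apply h (w y)
  have hinj : w x = w y → x = y := fun e => w.injective e
  revert hlo hhi hinj hx hy
  generalize w x = a, w y = b
  simp only [Fin.lt_def, Fin.ext_iff, lo, hi]
  intros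
  split_ifs at * <;> omega

lemma len_swp_mul_of_lt {j : ℕ} (h : j + 1 < n) {w : Perm (Fin n)}
    (hw : w⁻¹ (lo h) < w⁻¹ (hi h)) : len (swp j h * w) = len w + 1 := by
  rw [len_eq_card_inversions, inversions_swp_mul h hw, card_insert_of_notMem]
  · rfl
  · simp [mem_inversions, (lo_lt_hi h).le]

lemma len_swp_mul_of_gt {j : ℕ} (h : j + 1 < n) {w : Perm (Fin n)}
    (hw : w⁻¹ (hi h) < w⁻¹ (lo h)) : len w = len (swp j h * w) + 1 := by
  have := len_swp_mul_of_lt h (w := swp j h * w) (by simpa [swp_inv, swp_apply_lo, swp_apply_hi])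
  rwa [← mul_assoc, swp_mul_swp, one_mul] at this

lemma len_swp {j : ℕ} (h : j + 1 < n) : len (swp j h) = 1 := by
  simpa [len_one] using len_swp_mul_of_lt h (w := 1) (lo_lt_hi h)

lemma len_inv (w : Perm (Fin n)) : len w⁻¹ = len w := by
  refine card_nbij' (fun p => (w⁻¹ p.2, w⁻¹ p.1)) (fun p => (w p.2, w p.1)) ?_ ?_ ?_ ?_ <;>
    simp +contextual [Set.MapsTo, Set.LeftInvOn]

lemma len_mul_swp_of_lt {j : ℕ} (h : j + 1 < n) {w : Perm (Fin n)}
    (hw : w (lo h) < w (hi h)) : len (w * swp j h) = len w + 1 := by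
  rw [← len_inv, mul_inv_rev, swp_inv, len_swp_mul_of_lt h (by simpa), len_inv]

lemma len_mul_le (a b : Perm (Fin n)) : len (b * a) ≤ len a + len b := by
  have hsub : inversions (b * a) ⊆
      inversions a ∪ (inversions b).image fun p => (a⁻¹ p.1, a⁻¹ p.2) := by
    intro p hp
    rw [mem_inversions, Perm.mul_apply, Perm.mul_apply] at hp
    rcases lt_or_gt_of_ne (a.injective.ne hp.1.ne') with hlt | hlt
    · exact mem_union_left _ (mem_inversions.2 ⟨hp.1, hlt⟩)
    · refine mem_union_right _ (mem_image.2 ⟨(a p.1, a p.2), mem_inversions.2 ⟨hlt, hp.2⟩, ?_⟩)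
      simp
  exact (card_le_card hsub).trans ((card_union_le _ _).trans (Nat.add_le_add_left card_image_le _))

lemma exists_adjacent_descent {α : Type*} [LinearOrder α] (f : Fin n → α) {x y : Fin n}
    (hxy : x ≤ y) (hf : f y < f x) :
    ∃ j, ∃ h : j + 1 < n, x ≤ lo h ∧ hi h ≤ y ∧ f (hi h) < f (lo h) := by
  obtain ⟨a, ha⟩ := x
  obtain ⟨b, hb⟩ := y
  rw [Fin.mk_le_mk] at hxy
  induction b, hxy using Nat.le_induction with
  | base => exact absurd hf (lt_irrefl _)
  | succ b hab ih =>
    by_cases hfb : f ⟨b, by omega⟩ < f ⟨a, ha⟩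
    · obtain ⟨j, h, h1, h2, h3⟩ := ih (by omega) hfb
      exact ⟨j, h, h1, h2.trans (Fin.mk_le_mk.2 b.le_succ), h3⟩
    · exact ⟨b, hb, Fin.mk_le_mk.2 hab, le_rfl, hf.trans_le (not_lt.1 hfb)⟩

lemma exists_inversion_of_ne_one {w : Perm (Fin n)} (hw : w ≠ 1) : ∃ x y, x < y ∧ w y < w x := by
  by_contra! hmono
  have hw' : StrictMono w := fun x y hxy => (hmono x y hxy).lt_of_ne (w.injective.ne hxy.ne)
  refine hw (Equiv.ext fun x => ?_)
  exact congrArg (· x)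
    (Subsingleton.elim (hw'.orderIsoOfSurjective w w.surjective) (OrderIso.refl _))

lemma exists_descent_of_ne_one {w : Perm (Fin n)} (hw : w ≠ 1) :
    ∃ j, ∃ h : j + 1 < n, w⁻¹ (hi h) < w⁻¹ (lo h) := by
  obtain ⟨x, y, hxy, hinv⟩ := exists_inversion_of_ne_one (inv_ne_one.2 hw)
  obtain ⟨j, h, -, -, hd⟩ := exists_adjacent_descent (⇑w⁻¹) hxy.le hinv
  exact ⟨j, h, hd⟩

def SJ (J : Fin n × Fin n) : Subgroup (Perm (Fin n)) :=
  fixingSubgroup (Perm (Fin n)) {i | ¬ memJ J i}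

lemma mem_SJ {J : Fin n × Fin n} {v : Perm (Fin n)} : v ∈ SJ J ↔ inSJ J v := by
  simp only [SJ, mem_fixingSubgroup_iff, Set.mem_ofPred_eq, Perm.smul_def, inSJ]
  exact forall_congr' fun i => not_imp_comm

section SJ

variable {J : Fin n × Fin n} {u v : Perm (Fin n)} {x y : Fin n}

lemma inSJ.mul (hu : inSJ J u) (hv : inSJ J v) : inSJ J (u * v) :=
  mem_SJ.1 ((SJ J).mul_mem (mem_SJ.2 hu) (mem_SJ.2 hv))

lemma inSJ.inv (hv : inSJ J v) : inSJ J v⁻¹ :=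
  mem_SJ.1 ((SJ J).inv_mem (mem_SJ.2 hv))

lemma memJ_of_le_of_le (hx : memJ J x) (hy : memJ J y) {z : Fin n} (hxz : x ≤ z) (hzy : z ≤ y) :
    memJ J z :=
  ⟨hx.1.trans hxz, hzy.trans hy.2⟩

lemma lt_of_memJ_of_ne (hx : memJ J x) (hy : memJ J y) (hxy : x ≠ y) : J.1 < J.2 := by
  simp only [memJ, Fin.le_def, Fin.lt_def, ne_eq, Fin.ext_iff] at *
  omega

lemma inSJ.apply_eq (hv : inSJ J v) (hx : ¬ memJ J x) : v x = x :=
  not_not.1 (mt (hv x) hx)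

lemma inSJ.memJ_apply (hv : inSJ J v) (hx : memJ J x) : memJ J (v x) := by
  by_contra hvx
  rw [v.injective (hv.apply_eq hvx)] at hvx
  exact hvx hx

lemma inSJ.apply_lt_apply_iff (hv : inSJ J v) (hxy : ¬ (memJ J x ∧ memJ J y)) :
    v x < v y ↔ x < y := by
  by_cases hx : memJ J x
  · have hvx := hv.memJ_apply hx
    rw [hv.apply_eq fun hy => hxy ⟨hx, hy⟩]
    simp only [memJ, Fin.le_def, Fin.lt_def] at *
    omega
  · have hvy : memJ J y → memJ J (v y) := hv.memJ_apply
    rw [hv.apply_eq hx]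
    by_cases hy : memJ J y
    · have := hvy hy
      simp only [memJ, Fin.le_def, Fin.lt_def] at *
      omega
    · rw [hv.apply_eq hy]

lemma inSJ_swp {j : ℕ} (h : j + 1 < n) (hlo : memJ J (lo h)) (hhi : memJ J (hi h)) :
    inSJ J (swp j h) := by
  intro i hi'
  rcases (swap_apply_ne_self_iff.1 hi').2 with rfl | rfl
  exacts [hlo, hhi]

lemma exists_descent_of_memJ (hx : memJ J x) (hy : memJ J y) (hxy : x ≤ y) (hu : u⁻¹ y < u⁻¹ x) :
    ∃ j, ∃ h : j + 1 < n, memJ J (lo h) ∧ memJ J (hi h) ∧ u⁻¹ (hi h) < u⁻¹ (lo h) := by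
  obtain ⟨j, h, h1, h2, hd⟩ := exists_adjacent_descent (⇑u⁻¹) hxy hu
  exact ⟨j, h, memJ_of_le_of_le hx hy h1 ((lo_lt_hi h).le.trans h2),
    memJ_of_le_of_le hx hy (h1.trans (lo_lt_hi h).le) h2, hd⟩

lemma exists_descent_of_inSJ (hv : inSJ J v) (hv1 : v ≠ 1) :
    ∃ j, ∃ h : j + 1 < n, memJ J (lo h) ∧ memJ J (hi h) ∧ v⁻¹ (hi h) < v⁻¹ (lo h) := by
  obtain ⟨x, y, hxy, hinv⟩ := exists_inversion_of_ne_one (inv_ne_one.2 hv1)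
  have hJ : memJ J x ∧ memJ J y := by
    by_contra hJ
    exact lt_asymm hinv ((hv.inv.apply_lt_apply_iff hJ).2 hxy)
  exact exists_descent_of_memJ hJ.1 hJ.2 hxy.le hinv

end SJ

def inversionsIn (J : Fin n × Fin n) (u : Perm (Fin n)) : Finset (Fin n × Fin n) :=
  (inversions u).filter fun p => memJ J (u p.1) ∧ memJ J (u p.2)

section InversionsIn

variable {J : Fin n × Fin n} {u v : Perm (Fin n)}

lemma mem_inversionsIn {p : Fin n × Fin n} :
    p ∈ inversionsIn J u ↔ p.1 < p.2 ∧ u p.2 < u p.1 ∧ memJ J (u p.1) ∧ memJ J (u p.2) := by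
  simp [inversionsIn, mem_inversions, and_assoc]

lemma card_inversionsIn_swp_mul {j : ℕ} (h : j + 1 < n) (hlo : memJ J (lo h))
    (hhi : memJ J (hi h)) (hu : u⁻¹ (lo h) < u⁻¹ (hi h)) :
    #(inversionsIn J (swp j h * u)) = #(inversionsIn J u) + 1 := by
  have hs := inSJ_swp h hlo hhi
  have hmem : ∀ x, memJ J (swp j h x) ↔ memJ J x := fun x =>
    ⟨fun hx => by simpa [← Perm.mul_apply, swp_mul_swp] using hs.memJ_apply hx, hs.memJ_apply⟩
  have hins :
      inversionsIn J (swp j h * u) = insert (u⁻¹ (lo h), u⁻¹ (hi h)) (inversionsIn J u) := by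
    simp only [inversionsIn, inversions_swp_mul h hu, filter_insert, Perm.mul_apply, hmem]
    simp [hlo, hhi]
  rw [hins, card_insert_of_notMem]
  simp [mem_inversionsIn, (lo_lt_hi h).le]

lemma exists_descent_of_inversionsIn_nonempty (hu : (inversionsIn J u).Nonempty) :
    ∃ j, ∃ h : j + 1 < n, memJ J (lo h) ∧ memJ J (hi h) ∧ u⁻¹ (hi h) < u⁻¹ (lo h) := by
  obtain ⟨p, hp⟩ := hu
  obtain ⟨hp12, hu21, hJ1, hJ2⟩ := mem_inversionsIn.1 hp
  exact exists_descent_of_memJ hJ2 hJ1 hu21.le (by simpa using hp12)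

lemma inv_lt_inv_of_inversionsIn_eq_empty (hu : inversionsIn J u = ∅) {x y : Fin n}
    (hx : memJ J x) (hy : memJ J y) (hxy : x < y) : u⁻¹ x < u⁻¹ y := by
  by_contra hle
  have hp : (u⁻¹ y, u⁻¹ x) ∈ inversionsIn J u := by
    refine mem_inversionsIn.2
      ⟨lt_of_le_of_ne (not_lt.1 hle) (u⁻¹.injective.ne hxy.ne'), by simpa using hxy, by simpa,
        by simpa⟩
  simp [hu] at hp

/-- `u` is the minimal representative of its coset `u S_J` (paper's order). -/
lemma len_mul_of_inversionsIn_eq_empty (hu : inversionsIn J u = ∅) (hv : inSJ J v) :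
    len (v * u) = len u + len v := by
  induction hk : len v using Nat.strong_induction_on generalizing v with
  | _ k ih =>
  by_cases hv1 : v = 1
  · subst hv1 hk
    rw [one_mul, len_one, add_zero]
  obtain ⟨j, h, hlo, hhi, hd⟩ := exists_descent_of_inSJ hv hv1
  set v' := swp j h * v
  have hv' : swp j h * v' = v := by rw [← mul_assoc, swp_mul_swp, one_mul]
  have hlen : len v = len v' + 1 := len_swp_mul_of_gt h hd
  have hasc : (v' * u)⁻¹ (lo h) < (v' * u)⁻¹ (hi h) := by
    simpa [v', mul_inv_rev, swp_inv, swp_apply_lo, swp_apply_hi] using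
      inv_lt_inv_of_inversionsIn_eq_empty hu (hv.inv.memJ_apply hhi) (hv.inv.memJ_apply hlo) hd
  rw [← hv', mul_assoc, len_swp_mul_of_lt h hasc,
    ih (len v') (by omega) ((inSJ_swp h hlo hhi).mul hv) rfl]
  omega

end InversionsIn

lemma sum_inSJ_mul_right {M : Type*} [AddCommMonoid M] {J : Fin n × Fin n} {g : Perm (Fin n)}
    (hg : inSJ J g) (F : Perm (Fin n) → M) :
    ∑ v ∈ (univ : Finset (Perm (Fin n))).filter (fun v => inSJ J v), F (v * g) =
      ∑ v ∈ (univ : Finset (Perm (Fin n))).filter (fun v => inSJ J v), F v := by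
  refine sum_nbij' (· * g) (· * g⁻¹) ?_ ?_ (fun _ _ => by simp) (fun _ _ => by simp)
    fun _ _ => rfl
  · simpa using fun v hv => hv.mul hg
  · simpa using fun v hv => hv.mul hg.inv

namespace HeckeOK

variable {H : Type*} [Ring H] [Algebra R2 H] {T : Perm (Fin n) → H} (hT : HeckeOK T)
include hT

lemma mul_swp_of_len_lt {j : ℕ} (h : j + 1 < n) {w : Perm (Fin n)}
    (hw : len w < len (swp j h * w)) : T w * T (swp j h) = T (swp j h * w) := by
  rw [hT.2, if_pos hw]

lemma mul_self_swp {j : ℕ} (h : j + 1 < n) :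
    T (swp j h) * T (swp j h) = qq • 1 + (qq - 1) • T (swp j h) := by
  rw [hT.2, swp_mul_swp, len_swp, len_one, if_neg (by omega), hT.1]

/-- `T_a T_b = T_{ab}` when `ℓ(ab) = ℓ(a) + ℓ(b)`; the paper's product `ab` is `b * a`. -/
lemma mul_eq_of_len_mul {a b : Perm (Fin n)} (hab : len (b * a) = len a + len b) :
    T a * T b = T (b * a) := by
  induction hk : len b using Nat.strong_induction_on generalizing a b with
  | _ k ih =>
  by_cases hb1 : b = 1
  · rw [hb1, hT.1, mul_one, one_mul]
  obtain ⟨j, h, hd⟩ := exists_descent_of_ne_one hb1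
  set b' := swp j h * b
  have hb' : swp j h * b' = b := by rw [← mul_assoc, swp_mul_swp, one_mul]
  have hlen : len b = len b' + 1 := len_swp_mul_of_gt h hd
  have hsub := len_mul_le a b'
  have hstep := len_mul_le (b' * a) (swp j h)
  rw [len_swp, ← mul_assoc, hb'] at hstep
  calc T a * T b = T a * T b' * T (swp j h) := by
        rw [mul_assoc, hT.mul_swp_of_len_lt h (by rw [hb']; omega), hb']
    _ = T (b' * a) * T (swp j h) := by rw [ih (len b') (by omega) (by omega) rfl]
    _ = T (b * a) := by
        rw [hT.mul_swp_of_len_lt h (by rw [← mul_assoc, hb']; omega), ← mul_assoc, hb']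

lemma swp_mul {j : ℕ} (h : j + 1 < n) (w : Perm (Fin n)) :
    T (swp j h) * T w =
      if w (lo h) < w (hi h) then T (w * swp j h)
      else qq • T (w * swp j h) + (qq - 1) • T w := by
  split_ifs with hw
  · exact hT.mul_eq_of_len_mul (by rw [len_mul_swp_of_lt h hw, len_swp, add_comm])
  · have hw' : (w * swp j h) (lo h) < (w * swp j h) (hi h) := by
      simpa [swp_apply_lo, swp_apply_hi, lt_iff_le_and_ne, w.injective.ne (lo_lt_hi h).ne]
        using hw
    have hTw : T (swp j h) * T (w * swp j h) = T w := by
      rw [hT.mul_eq_of_len_mul (by rw [len_mul_swp_of_lt h hw', len_swp, add_comm]),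
        mul_assoc, swp_mul_swp, mul_one]
    rw [← hTw, ← mul_assoc, hT.mul_self_swp, add_mul, smul_mul_assoc, one_mul, smul_mul_assoc]

/-- Right multiplication by `s` exchanges the `v ∈ S_J` with `ℓ(vs) > ℓ(v)` and those with
`ℓ(vs) < ℓ(v)`. -/
lemma swp_mul_CJ {J : Fin n × Fin n} {j : ℕ} (h : j + 1 < n) (hlo : memJ J (lo h))
    (hhi : memJ J (hi h)) : T (swp j h) * CJ T J = qq • CJ T J := by
  obtain ⟨S, hS⟩ : ∃ S, (univ : Finset (Perm (Fin n))).filter (fun v => inSJ J v) = S :=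
    ⟨_, rfl⟩
  have hflip : ∀ v : Perm (Fin n),
      (v * swp j h) (lo h) < (v * swp j h) (hi h) ↔ ¬ v (lo h) < v (hi h) := fun v => by
    simp [swp_apply_lo, swp_apply_hi, lt_iff_le_and_ne, v.injective.ne (lo_lt_hi h).ne]
  have hpair : ∀ F : Perm (Fin n) → H,
      ∑ v ∈ S, (if v (lo h) < v (hi h) then F (v * swp j h) else 0) =
        ∑ v ∈ S, (if v (lo h) < v (hi h) then 0 else F v) := fun F => by
    rw [← hS, ← sum_inSJ_mul_right (inSJ_swp h hlo hhi)]
    simp only [hflip, mul_assoc, swp_mul_swp, mul_one, ite_not]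
  have hpair' := hpair fun v => T (v * swp j h)
  simp only [mul_assoc, swp_mul_swp, mul_one] at hpair'
  have hsplit : ∀ v : Perm (Fin n), T (swp j h) * T v =
      (if v (lo h) < v (hi h) then T (v * swp j h) else 0) +
        qq • (if v (lo h) < v (hi h) then 0 else T (v * swp j h)) +
        (qq - 1) • (if v (lo h) < v (hi h) then 0 else T v) := fun v => by
    rw [hT.swp_mul]; split_ifs <;> simp
  have hT_split : ∀ v : Perm (Fin n), T v =
      (if v (lo h) < v (hi h) then T v else 0) + (if v (lo h) < v (hi h) then 0 else T v) :=
    fun v => by split_ifs <;> simp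
  rw [CJ, hS, mul_sum, sum_congr rfl fun v _ => hsplit v, sum_congr rfl fun v _ => hT_split v]
  simp only [sum_add_distrib, ← smul_sum, hpair T, ← hpair']
  rw [smul_add, sub_smul, one_smul]
  abel

lemma mul_CJ (J : Fin n × Fin n) (u : Perm (Fin n)) :
    T u * CJ T J = qq ^ #(inversionsIn J u) •
      ∑ v ∈ (univ : Finset (Perm (Fin n))).filter (fun v => inSJ J v), T (v * u) := by
  induction hk : #(inversionsIn J u) generalizing u with
  | zero =>
    rw [pow_zero, one_smul, CJ, mul_sum]
    refine sum_congr rfl fun v hv => hT.mul_eq_of_len_mul ?_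
    exact len_mul_of_inversionsIn_eq_empty (card_eq_zero.1 hk) (mem_filter.1 hv).2
  | succ k ih =>
    obtain ⟨j, h, hlo, hhi, hd⟩ :=
      exists_descent_of_inversionsIn_nonempty (J := J) (u := u) (card_pos.1 (by omega))
    set u' := swp j h * u
    have hu' : swp j h * u' = u := by rw [← mul_assoc, swp_mul_swp, one_mul]
    have hasc : u'⁻¹ (lo h) < u'⁻¹ (hi h) := by
      simpa [u', mul_inv_rev, swp_inv, swp_apply_lo, swp_apply_hi] using hd
    have hcard := card_inversionsIn_swp_mul h hlo hhi hasc
    rw [hu'] at hcard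
    have hlen : len u = len u' + 1 := len_swp_mul_of_gt h hd
    calc T u * CJ T J = T u' * (T (swp j h) * CJ T J) := by
          rw [← mul_assoc, hT.mul_swp_of_len_lt h (by rw [hu']; omega), hu']
      _ = qq ^ (k + 1) • ∑ v ∈ (univ : Finset (Perm (Fin n))).filter (fun v => inSJ J v),
            T (v * u) := by
        rw [hT.swp_mul_CJ h hlo hhi, mul_smul_comm, ih u' (by omega), smul_smul, ← pow_succ',
          ← hu', ← sum_inSJ_mul_right (inSJ_swp h hlo hhi)]
        simp only [mul_assoc]

end HeckeOK

lemma odd_card_filter_changes_iff (b : ℕ → Prop) [DecidablePred b] (K : ℕ) :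
    Odd #((range K).filter fun k => ¬ (b k ↔ b (k + 1))) ↔ ¬ (b 0 ↔ b K) := by
  induction K with
  | zero => simp
  | succ K ih =>
    rw [range_add_one, filter_insert]
    by_cases hK : b K ↔ b (K + 1)
    · rw [if_neg (not_not.2 hK), ih]
      tauto
    · rw [if_pos hK, card_insert_of_notMem (by simp), Nat.odd_add_one, ih]
      tauto

section PathFamily

variable {m : ℕ} {Js : Fin m → Fin n × Fin n} {vs : Fin m → Perm (Fin n)}

lemma posAt_zero (vs : Fin m → Perm (Fin n)) : posAt vs 0 = 1 := by
  simp [posAt]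

lemma posAt_succ (vs : Fin m → Perm (Fin n)) (p : Fin m) :
    posAt vs (p + 1) = vs p * posAt vs p := by
  simp [posAt, List.take_add_one]

lemma posAt_snoc (vs : Fin m → Perm (Fin n)) (v : Perm (Fin n)) {k : ℕ} (hk : k ≤ m) :
    posAt (Fin.snoc vs v : Fin (m + 1) → Perm (Fin n)) k = posAt vs k := by
  rw [posAt, posAt, List.ofFn_succ', List.concat_eq_append,
    List.take_append_of_le_length (by simpa using hk)]
  simp

lemma typeOf_snoc (vs : Fin m → Perm (Fin n)) (v : Perm (Fin n)) :
    typeOf (Fin.snoc vs v : Fin (m + 1) → Perm (Fin n)) = v * typeOf vs := by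
  rw [typeOf, typeOf, posAt, posAt, List.ofFn_succ', List.concat_eq_append,
    List.take_of_length_le (by simp), List.take_of_length_le (by simp), List.reverse_append]
  simp

lemma isPathFamily_snoc {Js : Fin (m + 1) → Fin n × Fin n} {v : Perm (Fin n)} :
    IsPathFamily Js (Fin.snoc vs v) ↔
      IsPathFamily (fun p => Js p.castSucc) vs ∧ inSJ (Js (Fin.last m)) v := by
  simp [IsPathFamily, Fin.forall_fin_succ']

lemma meetAt_iff {i j : Fin n} (hij : i ≠ j) (p : Fin m) :
    meetAt Js vs p i j ↔ memJ (Js p) (posAt vs p i) ∧ memJ (Js p) (posAt vs p j) := by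
  have hne := (posAt vs p).injective.ne hij
  simp only [meetAt, centeredAt]
  exact ⟨fun h => ⟨h.1.2, h.2.2⟩, fun h =>
    ⟨⟨lt_of_memJ_of_ne h.1 h.2 hne, h.1⟩, ⟨lt_of_memJ_of_ne h.1 h.2 hne, h.2⟩⟩⟩

lemma crossingAt_iff (hvs : IsPathFamily Js vs) {i j : Fin n} (hij : i ≠ j) (p : Fin m) :
    crossingAt Js vs p i j ↔
      ¬ (posAt vs p i < posAt vs p j ↔ posAt vs (p + 1) i < posAt vs (p + 1) j) := by
  refine ⟨And.right, fun hflip => ⟨?_, hflip⟩⟩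
  by_contra hmeet
  rw [meetAt_iff hij] at hmeet
  rw [posAt_succ, Perm.mul_apply, Perm.mul_apply, (hvs p).apply_lt_apply_iff hmeet] at hflip
  exact hflip Iff.rfl

lemma odd_crossBefore_iff (hvs : IsPathFamily Js vs) {i j : Fin n} (hij : i ≠ j) (p : Fin m) :
    Odd (crossBefore Js vs p i j) ↔ ¬ (i < j ↔ posAt vs p i < posAt vs p j) := by
  have hcard : crossBefore Js vs p i j = #((range p).filter fun k =>
      ¬ (posAt vs k i < posAt vs k j ↔ posAt vs (k + 1) i < posAt vs (k + 1) j)) := by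
    refine card_bij (fun k _ => k.val) (fun k hk => ?_) (fun _ _ _ _ => Fin.ext) fun k hk => ?_
    · rw [mem_filter] at hk ⊢
      exact ⟨mem_range.2 hk.2.1, (crossingAt_iff hvs hij k).1 hk.2.2⟩
    · rw [mem_filter, mem_range] at hk
      refine ⟨⟨k, hk.1.trans p.isLt⟩, mem_filter.2 ⟨mem_univ _, hk.1, ?_⟩, rfl⟩
      exact (crossingAt_iff hvs hij _).2 hk.2
  rw [hcard, odd_card_filter_changes_iff (fun k => posAt vs k i < posAt vs k j), posAt_zero]
  rfl

lemma defectiveAt_iff (hvs : IsPathFamily Js vs) {i j : Fin n} (hij : i < j) (p : Fin m) :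
    defectiveAt Js vs p i j ↔ (i, j) ∈ inversionsIn (Js p) (posAt vs p) := by
  have hne := (posAt vs p).injective.ne hij.ne
  rw [defectiveAt, meetAt_iff hij.ne, odd_crossBefore_iff hvs hij.ne, mem_inversionsIn,
    iff_true_left hij, not_lt, le_iff_lt_or_eq, or_iff_left hne.symm]
  tauto

lemma dfctNum_eq_sum_card_inversionsIn (hvs : IsPathFamily Js vs) :
    dfctNum Js vs = ∑ p, #(inversionsIn (Js p) (posAt vs p)) := by
  rw [dfctNum, card_filter, Fintype.sum_prod_type, sum_comm]
  refine sum_congr rfl fun p _ => ?_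
  rw [← card_filter]
  congr 1
  ext ⟨i, j⟩
  simp only [mem_filter, mem_univ, true_and]
  exact ⟨fun h => (defectiveAt_iff hvs h.1 p).1 h.2,
    fun h => ⟨(mem_inversionsIn.1 h).1, (defectiveAt_iff hvs (mem_inversionsIn.1 h).1 p).2 h⟩⟩

lemma dfctNum_snoc {Js : Fin (m + 1) → Fin n × Fin n} {v : Perm (Fin n)}
    (hvs : IsPathFamily Js (Fin.snoc vs v)) :
    dfctNum Js (Fin.snoc vs v) =
      dfctNum (fun p => Js p.castSucc) vs + #(inversionsIn (Js (Fin.last m)) (typeOf vs)) := by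
  rw [dfctNum_eq_sum_card_inversionsIn hvs,
    dfctNum_eq_sum_card_inversionsIn (isPathFamily_snoc.1 hvs).1, Fin.sum_univ_castSucc]
  simp [posAt_snoc, typeOf, Fin.is_le']

lemma sum_isPathFamily_snoc {M : Type*} [AddCommMonoid M] (Js : Fin (m + 1) → Fin n × Fin n)
    (F : (Fin (m + 1) → Perm (Fin n)) → M) :
    ∑ vs ∈ (univ : Finset (Fin (m + 1) → Perm (Fin n))).filter (IsPathFamily Js), F vs =
      ∑ vs ∈ (univ : Finset (Fin m → Perm (Fin n))).filter
          (IsPathFamily fun p => Js p.castSucc),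
        ∑ v ∈ (univ : Finset (Perm (Fin n))).filter (fun v => inSJ (Js (Fin.last m)) v),
          F (Fin.snoc vs v) := by
  rw [← sum_product_right']
  refine (sum_equiv (Fin.snocEquiv fun _ => Perm (Fin n)) (fun x => ?_) fun _ _ => rfl).symm
  change _ ↔ (Fin.snoc x.2 x.1 : Fin (m + 1) → Perm (Fin n)) ∈ _
  simp [isPathFamily_snoc, and_comm]

end PathFamily

lemma Cprod_snoc {m : ℕ} {H : Type*} [Ring H] [Algebra R2 H] (T : Perm (Fin n) → H)
    (Js : Fin (m + 1) → Fin n × Fin n) :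
    Cprod T Js = Cprod T (fun p => Js p.castSucc) * CJ T (Js (Fin.last m)) := by
  rw [Cprod, Cprod, List.ofFn_succ', List.concat_eq_append, List.prod_append,
    List.prod_singleton]

theorem HeckeOK.Cprod_eq_sum {H : Type*} [Ring H] [Algebra R2 H] {T : Perm (Fin n) → H}
    (hT : HeckeOK T) {m : ℕ} (Js : Fin m → Fin n × Fin n) :
    Cprod T Js = ∑ vs ∈ (univ : Finset (Fin m → Perm (Fin n))).filter (IsPathFamily Js),
      qq ^ dfctNum Js vs • T (typeOf vs) := by
  induction m with
  | zero =>
    rw [filter_true_of_mem fun vs _ p => p.elim0]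
    simp [Cprod, dfctNum, typeOf, posAt_zero, hT.1]
  | succ m ih =>
    rw [Cprod_snoc, ih, sum_mul, sum_isPathFamily_snoc]
    refine sum_congr rfl fun vs hvs => ?_
    rw [smul_mul_assoc, hT.mul_CJ, smul_smul, ← pow_add, smul_sum]
    refine sum_congr rfl fun v hv => ?_
    rw [dfctNum_snoc (isPathFamily_snoc.2 ⟨(mem_filter.1 hvs).2, (mem_filter.1 hv).2⟩),
      typeOf_snoc]

end

noncomputable section
open Equiv Finset
open scoped Classical

theorem kl_product_coefficients_defects_general
    {n m : ℕ} (Js : Fin m → Fin n × Fin n)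
    {H : Type*} [Ring H] [Algebra R2 H]
    (T : Module.Basis (Perm (Fin n)) R2 H) (hT : HeckeOK ⇑T)
    (w : Perm (Fin n)) :
    T.repr (Cprod (⇑T) Js) w =
      ∑ vs ∈ (univ : Finset (Fin m → Perm (Fin n))).filter
          (fun vs => IsPathFamily Js vs ∧ typeOf vs = w),
        qq ^ dfctNum Js vs := by
  rw [hT.Cprod_eq_sum, map_sum, Finsupp.finsetSum_apply, ← filter_filter,
    sum_filter (fun vs => typeOf vs = w)]
  simp [Finsupp.single_apply]

/-- Corollary 4.2 / `c:sigmastats`, generalizing Deodhar's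
defect formula.  Writing
`C̃_{s_{J_1}}(q) ⋯ C̃_{s_{J_m}}(q) = Σ_w a_w T_w` in the natural basis of
`H_n(q)`, for every `w ∈ S_n` we have `a_w = Σ_π q^{dfct(π)}`, the sum over
all path families `π` of type `w` covering `G_{J_1} ∘ ⋯ ∘ G_{J_m}`. -/
theorem kl_product_coefficients_defects
    {n m : ℕ} (Js : Fin m → Fin n × Fin n) (hJs : ∀ p, (Js p).1 ≤ (Js p).2)
    {H : Type*} [Ring H] [Algebra R2 H]
    (T : Module.Basis (Perm (Fin n)) R2 H) (hT : HeckeOK ⇑T)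
    (w : Perm (Fin n)) :
    T.repr (Cprod (⇑T) Js) w =
      ∑ vs ∈ (univ : Finset (Fin m → Perm (Fin n))).filter
          (fun vs => IsPathFamily Js vs ∧ typeOf vs = w),
        qq ^ dfctNum Js vs :=
  kl_product_coefficients_defects_general Js T hT w

end
end

section
/- Let the path family π cover the star network G = G' ∘ H, with restrictions π^{G'}, π^H to G', H. Fix u ∈ S_n and set w = u·type(π) and v = u·type(π^{G'}). Then incross(U(π,u,w)) = incross(U(π^{G'},u,v)) + incross(U(π^H,v,w)). -/
/- Common combinatorial setup: star networks, covering path families,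
   crossing/noncrossing statistics, and the base ring ℤ[q^{1/2},q^{-1/2}]. -/

open Equiv Finset
open scoped Classical

noncomputable section
open Equiv Finset
open scoped Classical

/-!
A triple `(π_i, π_j, p)` lives in a single factor, so counting inverted noncrossings factor by
factor splits `incross` into the factors of `G'` and those of `H`. On a factor of `G'` the paths
and columns of `π` and `π^{G'}` agree. On a factor of `H` the path of `π` from source `i` is the
path of `π^H` from source `g i`, where `g = type(π^{G'})`, and its column `u⁻¹ i` in `U(π,u,w)`
is the column `(g u)⁻¹ (g i)` of that path in `U(π^H,v,w)`.
-/

def incrossAt {n m : ℕ} (Js : Fin m → Fin n × Fin n) (vs : Fin m → Perm (Fin n))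
    (col : Fin n → ℕ) (p : Fin m) : ℕ :=
  #{ij : Fin n × Fin n | noncrossBelow Js vs p ij.1 ij.2 ∧ col ij.2 < col ij.1}

lemma incrossNum_eq_sum_incrossAt {n m : ℕ} (Js : Fin m → Fin n × Fin n)
    (vs : Fin m → Perm (Fin n)) (col : Fin n → ℕ) :
    incrossNum Js vs col = ∑ p, incrossAt Js vs col p := by
  simp only [incrossNum, incrossAt, card_filter]
  exact Fintype.sum_prod_type_right _

section Concatenation

variable {n m₁ m₂ : ℕ} (vs : Fin (m₁ + m₂) → Perm (Fin n))

lemma posAt_castAdd {k : ℕ} (hk : k ≤ m₁) :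
    posAt vs k = posAt (fun p => vs (Fin.castAdd m₂ p)) k := by
  unfold posAt
  congr 2
  apply List.ext_getElem
  · simp only [List.length_take, List.length_ofFn]
    omega
  · intro i _ _
    simp only [List.getElem_take, List.getElem_ofFn]
    rfl

lemma posAt_natAdd (k : ℕ) :
    posAt vs (m₁ + k) = posAt (fun p => vs (Fin.natAdd m₁ p)) k * posAt vs m₁ := by
  have hdrop : ((List.ofFn vs).drop m₁).take k =
      (List.ofFn fun p => vs (Fin.natAdd m₁ p)).take k := by
    apply List.ext_getElem
    · simp
    · intro i _ _
      simp only [List.getElem_take, List.getElem_drop, List.getElem_ofFn]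
      rfl
  rw [posAt, List.take_add, List.reverse_append, List.prod_append, hdrop]
  rfl

lemma typeOf_castAdd : typeOf (fun p => vs (Fin.castAdd m₂ p)) = posAt vs m₁ :=
  (posAt_castAdd vs le_rfl).symm

variable (Js : Fin m₁ → Fin n × Fin n) (Ks : Fin m₂ → Fin n × Fin n)

lemma noncrossBelow_castAdd_iff (p : Fin m₁) (i j : Fin n) :
    noncrossBelow (Fin.append Js Ks) vs (Fin.castAdd m₂ p) i j ↔
      noncrossBelow Js (fun q => vs (Fin.castAdd m₂ q)) p i j := by
  simp only [noncrossBelow, meetAt, centeredAt, memJ, Fin.append_left, Fin.val_castAdd,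
    posAt_castAdd vs p.isLt.le, posAt_castAdd vs p.isLt]

lemma noncrossBelow_natAdd_iff (p : Fin m₂) (i j : Fin n) :
    noncrossBelow (Fin.append Js Ks) vs (Fin.natAdd m₁ p) i j ↔
      noncrossBelow Ks (fun q => vs (Fin.natAdd m₁ q)) p (posAt vs m₁ i) (posAt vs m₁ j) := by
  simp only [noncrossBelow, meetAt, centeredAt, memJ, Fin.append_right, Fin.val_natAdd,
    Nat.add_assoc, posAt_natAdd vs, Perm.mul_apply]

lemma incrossAt_castAdd (col : Fin n → ℕ) (p : Fin m₁) :
    incrossAt (Fin.append Js Ks) vs col (Fin.castAdd m₂ p) =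
      incrossAt Js (fun q => vs (Fin.castAdd m₂ q)) col p := by
  simp only [incrossAt, noncrossBelow_castAdd_iff]

lemma incrossAt_natAdd (col : Fin n → ℕ) (p : Fin m₂) :
    incrossAt (Fin.append Js Ks) vs col (Fin.natAdd m₁ p) =
      incrossAt Ks (fun q => vs (Fin.natAdd m₁ q)) (fun s => col ((posAt vs m₁)⁻¹ s)) p := by
  refine card_equiv ((posAt vs m₁).prodCongr (posAt vs m₁)) fun ij => ?_
  simp [noncrossBelow_natAdd_iff]

end Concatenation

theorem incross_concatenation_general
    {n m₁ m₂ : ℕ} (Js : Fin m₁ → Fin n × Fin n) (Ks : Fin m₂ → Fin n × Fin n)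
    (vs : Fin (m₁ + m₂) → Perm (Fin n))
    (u : Perm (Fin n)) :
    incrossNum (Fin.append Js Ks) vs (fun i => ((u⁻¹ i : Fin n) : ℕ)) =
      incrossNum Js (fun p => vs (Fin.castAdd m₂ p))
          (fun i => ((u⁻¹ i : Fin n) : ℕ)) +
        incrossNum Ks (fun p => vs (Fin.natAdd m₁ p))
          (fun s =>
            (((typeOf (fun p => vs (Fin.castAdd m₂ p)) * u)⁻¹ s : Fin n) : ℕ)) := by
  simp only [incrossNum_eq_sum_incrossAt, Fin.sum_univ_add, incrossAt_castAdd,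
    incrossAt_natAdd, typeOf_castAdd, mul_inv_rev, Perm.mul_apply]

/-- Lemma 3.4, second identity / `l:decomposestat`.  Let
the path family `π` cover `G = G' ∘ H`, with restrictions `π^{G'}`, `π^H`.
Fix `u ∈ S_n` and set `w = u · type(π)`, `v = u · type(π^{G'})` (as
functions, `v = type(π^{G'}) ∘ u`).  Then
`incross(U(π,u,w)) = incross(U(π^{G'},u,v)) + incross(U(π^H,v,w))`: in the
one-row tableau `U(π,u,w)` the column of the path `π_i` is `u⁻¹(i)`, and in
`U(π^H,v,w)` the column of the path of `π^H` from source `s` is `v⁻¹(s)`. -/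
theorem incross_concatenation
    {n m₁ m₂ : ℕ} (Js : Fin m₁ → Fin n × Fin n) (Ks : Fin m₂ → Fin n × Fin n)
    (hJs : ∀ p, (Js p).1 ≤ (Js p).2) (hKs : ∀ p, (Ks p).1 ≤ (Ks p).2)
    (vs : Fin (m₁ + m₂) → Perm (Fin n))
    (hvs : IsPathFamily (Fin.append Js Ks) vs)
    (u : Perm (Fin n)) :
    incrossNum (Fin.append Js Ks) vs (fun i => ((u⁻¹ i : Fin n) : ℕ)) =
      incrossNum Js (fun p => vs (Fin.castAdd m₂ p))
          (fun i => ((u⁻¹ i : Fin n) : ℕ)) +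
        incrossNum Ks (fun p => vs (Fin.natAdd m₁ p))
          (fun s =>
            (((typeOf (fun p => vs (Fin.castAdd m₂ p)) * u)⁻¹ s : Fin n) : ℕ)) :=
  incross_concatenation_general Js Ks vs u

end
end
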